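/- arXiv:1703.00287 — 3 statements merged into one kernel-verified Lean document; each statement's English description precedes it below -/
import Mathlib

section
/- Let k, ℓ, b, n₁, n₂ be positive integers with k, ℓ ≤ b, 2(k+b) ≤ n₁, and 2(ℓ+b) ≤ n₂. Let R be a proj-intersecting family of k×ℓ rectangles in Z_{n₁} × Z_{n₂} with |R| ≥ 9b². Then either there exist rectangles I₁×J₀ and I₂×J₀ in R with d(I₁,I₂) ≥ b+1, or there exist rectangles I₀×J₃ and I₀×J₄ in R with d(J₃,J₄) ≥ b+1. -/
/-- Cyclic distance in `ZMod n`: the smaller of the two distances along the cycle. -/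
def cdist {n : ℕ} (u v : ZMod n) : ℕ := min (u - v).val (v - u).val

/-- The cyclic interval of length `k` with left end `i` in `ZMod n`. -/
def cInt {n : ℕ} (i : ZMod n) (k : ℕ) : Finset (ZMod n) :=
  (Finset.range k).image (fun j : ℕ => (i + (j : ZMod n) : ZMod n))

/-- Distance between two cyclic intervals: minimum cyclic distance between elements. -/
noncomputable def iDist {n : ℕ} (I J : Finset (ZMod n)) : ℕ :=
  sInf {d | ∃ u ∈ I, ∃ v ∈ J, d = cdist u v}

/-- `P` is a `k × ℓ` rectangle in `ZMod n₁ × ZMod n₂`. -/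
def IsRect {n₁ n₂ : ℕ} (k ℓ : ℕ) (P : Finset (ZMod n₁) × Finset (ZMod n₂)) : Prop :=
  (∃ i, P.1 = cInt i k) ∧ (∃ j, P.2 = cInt j ℓ)

/-- A family of rectangles is proj-intersecting if any two members have intersecting
projections in at least one coordinate. -/
def ProjIntersecting {n₁ n₂ : ℕ} (R : Finset (Finset (ZMod n₁) × Finset (ZMod n₂))) : Prop :=
  ∀ P ∈ R, ∀ Q ∈ R, (P.1 ∩ Q.1).Nonempty ∨ (P.2 ∩ Q.2).Nonempty

section Tools
variable {n : ℕ} [NeZero n]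

lemma val_add_cases (u v : ZMod n) :
    (u + v).val = u.val + v.val ∨ (u + v).val + n = u.val + v.val := by
  have h := ZMod.val_add u v
  have h1 := ZMod.val_lt u
  have h2 := ZMod.val_lt v
  have h3 := ZMod.val_lt (u + v)
  rcases Nat.lt_or_ge (u.val + v.val) n with hlt | hge
  · left; rw [h, Nat.mod_eq_of_lt hlt]
  · right; rw [h]
    have : (u.val + v.val) % n = u.val + v.val - n := by
      rw [Nat.mod_eq_sub_mod hge, Nat.mod_eq_of_lt (by omega)]
    omega

lemma sub_val_sum (u v : ZMod n) :
    (u - v).val + (v - u).val = 0 ∨ (u - v).val + (v - u).val = n := by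
  have h : (u - v) + (v - u) = 0 := by ring
  have := val_add_cases (u - v) (v - u)
  rw [h] at this
  simp only [ZMod.val_zero] at this
  omega

lemma sub_chain (u v w : ZMod n) :
    (u - w).val = (u - v).val + (v - w).val ∨
    (u - w).val + n = (u - v).val + (v - w).val := by
  have h : u - w = (u - v) + (v - w) := by ring
  rw [h]; exact val_add_cases _ _

omit [NeZero n] in
lemma cdist_comm (u v : ZMod n) : cdist u v = cdist v u := min_comm _ _

lemma natCast_val_self (u : ZMod n) : ((u.val : ℕ) : ZMod n) = u :=
  ZMod.natCast_rightInverse u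

lemma mem_cInt {i x : ZMod n} {k : ℕ} (hk : k ≤ n) : x ∈ cInt i k ↔ (x - i).val < k := by
  constructor
  · rintro hx
    obtain ⟨j, hj, rfl⟩ := Finset.mem_image.1 hx
    rw [Finset.mem_range] at hj
    have : i + (j : ZMod n) - i = (j : ZMod n) := by ring
    rw [this, ZMod.val_natCast, Nat.mod_eq_of_lt (by omega)]
    omega
  · intro hx
    refine Finset.mem_image.2 ⟨(x - i).val, Finset.mem_range.2 hx, ?_⟩
    rw [natCast_val_self]; ring

omit [NeZero n] in
lemma cInt_card_le (i : ZMod n) (k : ℕ) : (cInt i k).card ≤ k :=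
  le_trans (Finset.card_image_le) (by simp)

end Tools

section Tools2
variable {n : ℕ} [NeZero n]

/-- Intersecting intervals have close left endpoints. -/
lemma close_of_mem_inter {i i' x : ZMod n} {k : ℕ} (hk : k ≤ n)
    (hx : x ∈ cInt i k) (hx' : x ∈ cInt i' k) : cdist i i' ≤ k - 1 := by
  rw [mem_cInt hk] at hx hx'
  have c1 := sub_val_sum i i'
  have c2 := sub_val_sum x i
  have c3 := sub_val_sum x i'
  have c4 := sub_chain i' x i
  have c5 := sub_val_sum i' x
  have l1 := ZMod.val_lt (i - i')
  have l2 := ZMod.val_lt (i' - i)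
  unfold cdist
  omega

/-- One-sided helper for `endpoints_close`. -/
lemma endpoints_close_aux {i i' u v : ZMod n} {k bb : ℕ} (hn : k + bb ≤ n)
    (ht : (v - u).val ≤ bb) (hu : (u - i).val < k) (hv : (v - i').val < k) :
    cdist i i' ≤ k + bb - 1 := by
  have c1 := sub_val_sum i i'
  have c2 := sub_val_sum u i
  have c3 := sub_val_sum v i'
  have c4 := sub_val_sum v u
  -- chain: i' - i = (i' - v) + (v - u) + (u - i)
  have c5 := sub_chain i' v u
  have c6 := sub_chain i' u i
  have c7 := sub_val_sum i' v
  have c8 := sub_val_sum i' u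
  have l1 := ZMod.val_lt (i - i')
  have l2 := ZMod.val_lt (i' - i)
  have l3 := ZMod.val_lt (i' - v)
  have l4 := ZMod.val_lt (i' - u)
  have l5 := ZMod.val_lt (v - u)
  have l6 := ZMod.val_lt (u - i)
  unfold cdist
  omega

/-- Close intervals (in `iDist` sense witnessed by close elements) have close endpoints. -/
lemma endpoints_close {i i' u v : ZMod n} {k bb : ℕ} (hn : k + bb ≤ n)
    (h : cdist u v ≤ bb) (hu : u ∈ cInt i k) (hv : v ∈ cInt i' k) :
    cdist i i' ≤ k + bb - 1 := by
  have hk : k ≤ n := by omega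
  rw [mem_cInt hk] at hu hv
  rcases min_le_iff.1 h with h' | h'
  · rw [cdist_comm]
    exact endpoints_close_aux hn h' hv hu
  · exact endpoints_close_aux hn h' hu hv

/-- Points at distance ≤ r from x lie in an explicit interval of length 2r+1. -/
lemma mem_ball_cInt {x y : ZMod n} {r : ℕ} (hr : 2 * r + 1 ≤ n) (h : cdist x y ≤ r) :
    y ∈ cInt (x - (r : ZMod n)) (2 * r + 1) := by
  rw [mem_cInt (by omega)]
  have key : y - (x - (r : ZMod n)) = (y - x) + (r : ZMod n) := by ring
  rw [key]
  have c1 := val_add_cases (y - x) ((r : ZMod n))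
  have c2 : ((r : ZMod n)).val = r := by
    rw [ZMod.val_natCast, Nat.mod_eq_of_lt (by omega)]
  have c3 := sub_val_sum y x
  have l1 := ZMod.val_lt (y - x)
  have l2 := ZMod.val_lt (x - y)
  have l3 := ZMod.val_lt ((y - x) + (r : ZMod n))
  unfold cdist at h
  omega

/-- val of a difference when vals are ordered. -/
lemma val_sub_of_le {u v : ZMod n} (h : u.val ≤ v.val) : (v - u).val = v.val - u.val := by
  have : v - u = ((v.val - u.val : ℕ) : ZMod n) := by
    rw [Nat.cast_sub h, natCast_val_self, natCast_val_self]
  rw [this, ZMod.val_natCast, Nat.mod_eq_of_lt (by have := ZMod.val_lt v; omega)]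

end Tools2

section Clique

/-- A set of naturals < n with pairwise cyclic distance ≤ D has at most D+1 elements. -/
lemma nat_clique (D : ℕ) : ∀ n : ℕ, 2 * D + 2 ≤ n → ∀ S : Finset ℕ,
    (∀ x ∈ S, x < n) →
    (∀ x ∈ S, ∀ y ∈ S, x ≤ y → (y - x ≤ D ∨ n - (y - x) ≤ D)) →
    S.card ≤ D + 1 := by
  intro n hn
  induction n, hn using Nat.le_induction with
  | base =>
    intro S hlt hpair
    have aux : ∀ x ∈ S, ∀ y ∈ S, x ≤ y → x % (D + 1) = y % (D + 1) → x = y := by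
      intro x hx y hy hle hmod
      have hdvd : (D + 1) ∣ y - x := (Nat.modEq_iff_dvd' hle).1 hmod
      obtain ⟨c, hc⟩ := hdvd
      have hxlt := hlt x hx
      have hylt := hlt y hy
      have hp := hpair x hx y hy hle
      match c with
      | 0 => omega
      | 1 => omega
      | (c + 2) =>
        have : (D + 1) * 2 ≤ (D + 1) * (c + 2) := Nat.mul_le_mul_left _ (by omega)
        omega
    have : S.card ≤ (Finset.range (D + 1)).card := by
      apply Finset.card_le_card_of_injOn (fun x => x % (D + 1))
      · intro a ha
        exact Finset.mem_range.2 (Nat.mod_lt _ (by omega))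
      · intro x hx y hy hmod
        rcases le_total x y with h | h
        · exact aux x hx y hy h hmod
        · exact (aux y hy x hx h hmod.symm).symm
    simpa using this
  | succ n hn ih =>
    intro S hlt hpair
    -- find z ∉ S
    have hz : ∃ z, z < n + 1 ∧ z ∉ S := by
      by_contra hcon
      push_neg at hcon
      have h0 : 0 ∈ S := hcon 0 (by omega)
      have hD : D + 1 ∈ S := hcon (D + 1) (by omega)
      have := hpair 0 h0 (D + 1) hD (by omega)
      omega
    obtain ⟨z, hzn, hzS⟩ := hz
    set f : ℕ → ℕ := fun x => if x < z then x else x - 1 with hf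
    have hinj : Set.InjOn f S := by
      intro x hx y hy hxy
      have hxz : x ≠ z := fun h => hzS (h ▸ hx)
      have hyz : y ≠ z := fun h => hzS (h ▸ hy)
      simp only [hf] at hxy
      split_ifs at hxy <;> omega
    have hcard : S.card = (S.image f).card := (Finset.card_image_of_injOn hinj).symm
    rw [hcard]
    apply ih
    · intro x' hx'
      obtain ⟨x, hx, rfl⟩ := Finset.mem_image.1 hx'
      have := hlt x hx
      have hxz : x ≠ z := fun h => hzS (h ▸ hx)
      simp only [hf]
      split_ifs <;> omega
    · intro x' hx' y' hy' hle
      obtain ⟨x, hx, rfl⟩ := Finset.mem_image.1 hx'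
      obtain ⟨y, hy, rfl⟩ := Finset.mem_image.1 hy'
      have hxz : x ≠ z := fun h => hzS (h ▸ hx)
      have hyz : y ≠ z := fun h => hzS (h ▸ hy)
      have hxlt := hlt x hx
      have hylt := hlt y hy
      rcases le_total x y with h | h
      · have hp := hpair x hx y hy h
        simp only [hf] at hle ⊢
        split_ifs at hle ⊢ <;> omega
      · have hp := hpair y hy x hx h
        simp only [hf] at hle ⊢
        split_ifs at hle ⊢ <;> omega

/-- ZMod version of the clique bound. -/
lemma zmod_clique {n : ℕ} [NeZero n] {D : ℕ} (hD : 2 * D + 2 ≤ n)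
    (S : Finset (ZMod n)) (h : ∀ u ∈ S, ∀ v ∈ S, cdist u v ≤ D) : S.card ≤ D + 1 := by
  have hcard : S.card = (S.image ZMod.val).card :=
    (Finset.card_image_of_injOn (fun a _ b _ hab => ZMod.val_injective n hab)).symm
  rw [hcard]
  apply nat_clique D n hD
  · intro x hx
    obtain ⟨u, hu, rfl⟩ := Finset.mem_image.1 hx
    exact ZMod.val_lt u
  · intro x hx y hy hle
    obtain ⟨u, hu, rfl⟩ := Finset.mem_image.1 hx
    obtain ⟨v, hv, rfl⟩ := Finset.mem_image.1 hy
    have hd := h u hu v hv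
    have h1 : (v - u).val = v.val - u.val := val_sub_of_le hle
    have h2 := sub_val_sum u v
    have l1 := ZMod.val_lt v
    unfold cdist at hd
    omega

end Clique

section Cover
variable {n : ℕ} [NeZero n]

/-- Asymmetric version: points close to two far-apart centers lie in a small set. -/
lemma W_cover_aux {j₃ j₄ : ZMod n} {ℓ bb : ℕ} (hl : 0 < ℓ) (hlb : ℓ ≤ bb)
    (hn : 2 * (ℓ + bb) ≤ n) (hs : (j₄ - j₃).val ≤ (j₃ - j₄).val)
    (hfar : ℓ ≤ cdist j₃ j₄) :
    ∃ W : Finset (ZMod n), W.card ≤ ℓ - 1 ∧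
      ∀ y, cdist j₃ y ≤ ℓ - 1 → cdist j₄ y ≤ ℓ - 1 → y ∈ W := by
  set s := (j₄ - j₃).val with hsdef
  refine ⟨cInt (j₃ + ((s - ℓ + 1 : ℕ) : ZMod n)) (2 * ℓ - 1 - s), ?_, ?_⟩
  · have := cInt_card_le (j₃ + ((s - ℓ + 1 : ℕ) : ZMod n)) (2 * ℓ - 1 - s)
    unfold cdist at hfar
    omega
  · intro y h3 h4
    have hss := sub_val_sum j₃ j₄
    have hey := sub_val_sum y j₃
    have hfy := sub_val_sum y j₄
    have hchain := sub_chain y j₃ j₄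
    have l1 := ZMod.val_lt (y - j₃)
    have l2 := ZMod.val_lt (j₃ - y)
    have l3 := ZMod.val_lt (y - j₄)
    have l4 := ZMod.val_lt (j₄ - y)
    have l5 := ZMod.val_lt (j₃ - j₄)
    unfold cdist at h3 h4 hfar
    have hcval : ((s - ℓ + 1 : ℕ) : ZMod n).val = s - ℓ + 1 := by
      rw [ZMod.val_natCast, Nat.mod_eq_of_lt (by omega)]
    rw [mem_cInt (by omega)]
    have key : y - (j₃ + ((s - ℓ + 1 : ℕ) : ZMod n)) + ((s - ℓ + 1 : ℕ) : ZMod n)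
        = y - j₃ := by ring
    have hadd := val_add_cases (y - (j₃ + ((s - ℓ + 1 : ℕ) : ZMod n))) ((s - ℓ + 1 : ℕ) : ZMod n)
    rw [key, hcval] at hadd
    have l6 := ZMod.val_lt (y - (j₃ + ((s - ℓ + 1 : ℕ) : ZMod n)))
    omega

lemma W_cover {j₃ j₄ : ZMod n} {ℓ bb : ℕ} (hl : 0 < ℓ) (hlb : ℓ ≤ bb)
    (hn : 2 * (ℓ + bb) ≤ n) (hfar : ℓ ≤ cdist j₃ j₄) :
    ∃ W : Finset (ZMod n), W.card ≤ ℓ - 1 ∧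
      ∀ y, cdist j₃ y ≤ ℓ - 1 → cdist j₄ y ≤ ℓ - 1 → y ∈ W := by
  rcases le_total ((j₄ - j₃).val) ((j₃ - j₄).val) with h | h
  · exact W_cover_aux hl hlb hn h hfar
  · obtain ⟨W, hW, hcov⟩ := W_cover_aux hl hlb hn h (by rwa [cdist_comm])
    exact ⟨W, hW, fun y h3 h4 => hcov y h4 h3⟩

/-- Asymmetric version: points close to one of two close centers lie in a set of size 3k-2. -/
lemma U_cover_aux {i₃ i₄ : ZMod n} {k bb : ℕ} (hk : 0 < k) (hkb : k ≤ bb)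
    (hn : 2 * (k + bb) ≤ n) (hs : (i₄ - i₃).val ≤ (i₃ - i₄).val)
    (hclose : cdist i₃ i₄ ≤ k - 1) :
    ∃ U : Finset (ZMod n), U.card ≤ 3 * k - 2 ∧
      ∀ y, (cdist i₃ y ≤ k - 1 ∨ cdist i₄ y ≤ k - 1) → y ∈ U := by
  set s := (i₄ - i₃).val with hsdef
  refine ⟨cInt (i₃ - ((k - 1 : ℕ) : ZMod n)) (2 * k - 1 + s), ?_, ?_⟩
  · have := cInt_card_le (i₃ - ((k - 1 : ℕ) : ZMod n)) (2 * k - 1 + s)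
    unfold cdist at hclose
    omega
  · intro y hy
    have hss := sub_val_sum i₃ i₄
    have hey := sub_val_sum y i₃
    have hfy := sub_val_sum y i₄
    have hchain := sub_chain y i₃ i₄
    have l1 := ZMod.val_lt (y - i₃)
    have l2 := ZMod.val_lt (i₃ - y)
    have l3 := ZMod.val_lt (y - i₄)
    have l4 := ZMod.val_lt (i₄ - y)
    have l5 := ZMod.val_lt (i₃ - i₄)
    unfold cdist at hy hclose
    have hcval : ((k - 1 : ℕ) : ZMod n).val = k - 1 := by
      rw [ZMod.val_natCast, Nat.mod_eq_of_lt (by omega)]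
    rw [mem_cInt (by omega)]
    have key : y - (i₃ - ((k - 1 : ℕ) : ZMod n)) = (y - i₃) + ((k - 1 : ℕ) : ZMod n) := by
      ring
    rw [key]
    have hadd := val_add_cases (y - i₃) ((k - 1 : ℕ) : ZMod n)
    rw [hcval] at hadd
    have l6 := ZMod.val_lt ((y - i₃) + ((k - 1 : ℕ) : ZMod n))
    omega

lemma U_cover {i₃ i₄ : ZMod n} {k bb : ℕ} (hk : 0 < k) (hkb : k ≤ bb)
    (hn : 2 * (k + bb) ≤ n) (hclose : cdist i₃ i₄ ≤ k - 1) :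
    ∃ U : Finset (ZMod n), U.card ≤ 3 * k - 2 ∧
      ∀ y, (cdist i₃ y ≤ k - 1 ∨ cdist i₄ y ≤ k - 1) → y ∈ U := by
  rcases le_total ((i₄ - i₃).val) ((i₃ - i₄).val) with h | h
  · exact U_cover_aux hk hkb hn h hclose
  · obtain ⟨U, hU, hcov⟩ := U_cover_aux hk hkb hn h (by rwa [cdist_comm])
    exact ⟨U, hU, fun y hy => hcov y hy.symm⟩

end Cover

section Main

/-- Main counting lemma on the level of left-endpoint pairs. -/
lemma endpoint_main {n₁ n₂ k ℓ b : ℕ} [NeZero n₁] [NeZero n₂]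
    (hk : 0 < k) (hl : 0 < ℓ) (hkb : k ≤ b) (hlb : ℓ ≤ b)
    (h1 : 2 * (k + b) ≤ n₁) (h2 : 2 * (ℓ + b) ≤ n₂)
    (E : Finset (ZMod n₁ × ZMod n₂))
    (hPI : ∀ p ∈ E, ∀ q ∈ E, cdist p.1 q.1 ≤ k - 1 ∨ cdist p.2 q.2 ≤ ℓ - 1)
    (hN1 : ∀ p ∈ E, ∀ q ∈ E, p.2 = q.2 → cdist p.1 q.1 ≤ k + b - 1)
    (hN2 : ∀ p ∈ E, ∀ q ∈ E, p.1 = q.1 → cdist p.2 q.2 ≤ ℓ + b - 1) :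
    E.card < 9 * b ^ 2 := by
  have hb : 0 < b := lt_of_lt_of_le hk hkb
  -- fiber bounds
  have fib1 : ∀ j : ZMod n₂, (E.filter fun p => p.2 = j).card ≤ k + b := by
    intro j
    set F := E.filter fun p => p.2 = j with hF
    have hinj : Set.InjOn Prod.fst (F : Set (ZMod n₁ × ZMod n₂)) := by
      intro p hp q hq hpq
      have hp2 := (Finset.mem_filter.1 hp).2
      have hq2 := (Finset.mem_filter.1 hq).2
      exact Prod.ext hpq (hp2.trans hq2.symm)
    have hcard : F.card = (F.image Prod.fst).card := (Finset.card_image_of_injOn hinj).symm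
    rw [hcard]
    have := zmod_clique (D := k + b - 1) (by omega) (F.image Prod.fst) ?_
    · omega
    · intro u hu v hv
      obtain ⟨p, hp, rfl⟩ := Finset.mem_image.1 hu
      obtain ⟨q, hq, rfl⟩ := Finset.mem_image.1 hv
      exact hN1 p (Finset.mem_filter.1 hp).1 q (Finset.mem_filter.1 hq).1
        (((Finset.mem_filter.1 hp).2).trans ((Finset.mem_filter.1 hq).2).symm)
  have fib2 : ∀ i : ZMod n₁, (E.filter fun p => p.1 = i).card ≤ ℓ + b := by
    intro i
    set F := E.filter fun p => p.1 = i with hF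
    have hinj : Set.InjOn Prod.snd (F : Set (ZMod n₁ × ZMod n₂)) := by
      intro p hp q hq hpq
      have hp2 := (Finset.mem_filter.1 hp).2
      have hq2 := (Finset.mem_filter.1 hq).2
      exact Prod.ext (hp2.trans hq2.symm) hpq
    have hcard : F.card = (F.image Prod.snd).card := (Finset.card_image_of_injOn hinj).symm
    rw [hcard]
    have := zmod_clique (D := ℓ + b - 1) (by omega) (F.image Prod.snd) ?_
    · omega
    · intro u hu v hv
      obtain ⟨p, hp, rfl⟩ := Finset.mem_image.1 hu
      obtain ⟨q, hq, rfl⟩ := Finset.mem_image.1 hv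
      exact hN2 p (Finset.mem_filter.1 hp).1 q (Finset.mem_filter.1 hq).1
        (((Finset.mem_filter.1 hp).2).trans ((Finset.mem_filter.1 hq).2).symm)
  by_cases hc : ∀ p ∈ E, ∀ q ∈ E, cdist p.2 q.2 ≤ ℓ - 1
  · -- Case I: all second coordinates pairwise close
    set T := E.image Prod.snd with hT
    have hTcard : T.card ≤ ℓ := by
      have := zmod_clique (D := ℓ - 1) (by omega) T ?_
      · omega
      · intro u hu v hv
        obtain ⟨p, hp, rfl⟩ := Finset.mem_image.1 hu
        obtain ⟨q, hq, rfl⟩ := Finset.mem_image.1 hv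
        exact hc p hp q hq
    have hE : E.card ≤ (k + b) * T.card := by
      apply Finset.card_le_mul_card_image_of_maps_to
      · intro p hp; exact Finset.mem_image_of_mem _ hp
      · intro j hj; exact fib1 j
    have : E.card ≤ (k + b) * ℓ := le_trans hE (Nat.mul_le_mul_left _ hTcard)
    nlinarith
  · -- Case II: two points far apart in second coordinate
    push_neg at hc
    obtain ⟨p₃, hp₃, p₄, hp₄, hfar'⟩ := hc
    have hfar : ℓ ≤ cdist p₃.2 p₄.2 := by omega
    have hclose : cdist p₃.1 p₄.1 ≤ k - 1 := by
      rcases hPI p₃ hp₃ p₄ hp₄ with h | h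
      · exact h
      · omega
    obtain ⟨U, hUcard, hUcov⟩ := U_cover hk hkb h1 hclose
    obtain ⟨W, hWcard, hWcov⟩ := W_cover hl hlb h2 hfar
    have hsub : E ⊆ (E.filter fun p => p.1 ∈ U) ∪ (E.filter fun p => p.2 ∈ W) := by
      intro p hp
      rw [Finset.mem_union, Finset.mem_filter, Finset.mem_filter]
      by_cases h3 : cdist p₃.2 p.2 ≤ ℓ - 1
      · by_cases h4 : cdist p₄.2 p.2 ≤ ℓ - 1
        · exact Or.inr ⟨hp, hWcov p.2 h3 h4⟩
        · rcases hPI p₄ hp₄ p hp with h | h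
          · exact Or.inl ⟨hp, hUcov p.1 (Or.inr h)⟩
          · omega
      · rcases hPI p₃ hp₃ p hp with h | h
        · exact Or.inl ⟨hp, hUcov p.1 (Or.inl h)⟩
        · omega
    have c1 : (E.filter fun p => p.1 ∈ U).card ≤ (ℓ + b) * U.card := by
      apply Finset.card_le_mul_card_image_of_maps_to (f := Prod.fst)
      · intro p hp; exact (Finset.mem_filter.1 hp).2
      · intro i hi
        calc ((E.filter fun p => p.1 ∈ U).filter fun p => p.1 = i).card
            ≤ (E.filter fun p => p.1 = i).card := by
              apply Finset.card_le_card
              intro p hp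
              rw [Finset.mem_filter] at hp ⊢
              exact ⟨(Finset.mem_filter.1 hp.1).1, hp.2⟩
          _ ≤ ℓ + b := fib2 i
    have c2 : (E.filter fun p => p.2 ∈ W).card ≤ (k + b) * W.card := by
      apply Finset.card_le_mul_card_image_of_maps_to (f := Prod.snd)
      · intro p hp; exact (Finset.mem_filter.1 hp).2
      · intro j hj
        calc ((E.filter fun p => p.2 ∈ W).filter fun p => p.2 = j).card
            ≤ (E.filter fun p => p.2 = j).card := by
              apply Finset.card_le_card
              intro p hp
              rw [Finset.mem_filter] at hp ⊢
              exact ⟨(Finset.mem_filter.1 hp.1).1, hp.2⟩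
          _ ≤ k + b := fib1 j
    have htot : E.card ≤ (ℓ + b) * U.card + (k + b) * W.card :=
      le_trans (Finset.card_le_card hsub)
        (le_trans (Finset.card_union_le _ _) (Nat.add_le_add c1 c2))
    have hU3 : (ℓ + b) * U.card ≤ (2 * b) * (3 * b) :=
      Nat.mul_le_mul (by omega) (le_trans hUcard (by omega))
    have hW3 : (k + b) * W.card ≤ (2 * b) * b :=
      Nat.mul_le_mul (by omega) (le_trans hWcard (by omega))
    nlinarith

end Main

theorem stmt3 (k ℓ b n₁ n₂ : ℕ) (hk : 0 < k) (hl : 0 < ℓ) (hkb : k ≤ b) (hlb : ℓ ≤ b)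
    (h1 : 2 * (k + b) ≤ n₁) (h2 : 2 * (ℓ + b) ≤ n₂)
    (R : Finset (Finset (ZMod n₁) × Finset (ZMod n₂)))
    (hrect : ∀ P ∈ R, IsRect k ℓ P) (hproj : ProjIntersecting R)
    (hcard : 9 * b ^ 2 ≤ R.card) :
    (∃ P ∈ R, ∃ Q ∈ R, P.2 = Q.2 ∧ b + 1 ≤ iDist P.1 Q.1) ∨
    (∃ P ∈ R, ∃ Q ∈ R, P.1 = Q.1 ∧ b + 1 ≤ iDist P.2 Q.2) := by
  have hb : 0 < b := lt_of_lt_of_le hk hkb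
  haveI : NeZero n₁ := ⟨by omega⟩
  haveI : NeZero n₂ := ⟨by omega⟩
  by_contra hcon
  push_neg at hcon
  obtain ⟨hcon1, hcon2⟩ := hcon
  -- endpoint functions
  set fi : {P // P ∈ R} → ZMod n₁ := fun P => ((hrect P.1 P.2).1).choose with hfi
  set fj : {P // P ∈ R} → ZMod n₂ := fun P => ((hrect P.1 P.2).2).choose with hfj
  have hfi_spec : ∀ P : {P // P ∈ R}, P.1.1 = cInt (fi P) k := fun P =>
    ((hrect P.1 P.2).1).choose_spec
  have hfj_spec : ∀ P : {P // P ∈ R}, P.1.2 = cInt (fj P) ℓ := fun P =>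
    ((hrect P.1 P.2).2).choose_spec
  set E : Finset (ZMod n₁ × ZMod n₂) := R.attach.image (fun P => (fi P, fj P)) with hE
  have hinj : Set.InjOn (fun P => (fi P, fj P)) (R.attach : Set {P // P ∈ R}) := by
    intro P _ Q _ hPQ
    have h1' : fi P = fi Q := congrArg Prod.fst hPQ
    have h2' : fj P = fj Q := congrArg Prod.snd hPQ
    have e1 : P.1.1 = Q.1.1 := by rw [hfi_spec P, hfi_spec Q, h1']
    have e2 : P.1.2 = Q.1.2 := by rw [hfj_spec P, hfj_spec Q, h2']
    exact Subtype.ext (Prod.ext e1 e2)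
  have hEcard : E.card = R.card := by
    rw [hE, Finset.card_image_of_injOn hinj, Finset.card_attach]
  -- membership extraction
  have hmem : ∀ p ∈ E, ∃ P : {P // P ∈ R}, p = (fi P, fj P) := by
    intro p hp
    obtain ⟨P, _, rfl⟩ := Finset.mem_image.1 hp
    exact ⟨P, rfl⟩
  -- iDist bound transfer
  have hiDist1 : ∀ P Q : {P // P ∈ R}, fj P = fj Q → cdist (fi P) (fi Q) ≤ k + b - 1 := by
    intro P Q hjj
    have hPQ2 : P.1.2 = Q.1.2 := by rw [hfj_spec P, hfj_spec Q, hjj]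
    have hd : iDist P.1.1 Q.1.1 ≤ b := by
      have := hcon1 P.1 P.2 Q.1 Q.2 hPQ2
      omega
    -- the defining set is nonempty
    have hne : {d | ∃ u ∈ P.1.1, ∃ v ∈ Q.1.1, d = cdist u v}.Nonempty := by
      refine ⟨cdist (fi P + ((0:ℕ) : ZMod n₁)) (fi Q + ((0:ℕ) : ZMod n₁)),
        fi P + ((0:ℕ) : ZMod n₁), ?_, fi Q + ((0:ℕ) : ZMod n₁), ?_, rfl⟩
      · rw [hfi_spec P]; exact Finset.mem_image.2 ⟨0, Finset.mem_range.2 hk, rfl⟩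
      · rw [hfi_spec Q]; exact Finset.mem_image.2 ⟨0, Finset.mem_range.2 hk, rfl⟩
    have hmem' := Nat.sInf_mem hne
    obtain ⟨u, hu, v, hv, huv⟩ := hmem'
    have : cdist u v ≤ b := by rw [← huv]; exact hd
    rw [hfi_spec P] at hu
    rw [hfi_spec Q] at hv
    exact endpoints_close (by omega) this hu hv
  have hiDist2 : ∀ P Q : {P // P ∈ R}, fi P = fi Q → cdist (fj P) (fj Q) ≤ ℓ + b - 1 := by
    intro P Q hii
    have hPQ1 : P.1.1 = Q.1.1 := by rw [hfi_spec P, hfi_spec Q, hii]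
    have hd : iDist P.1.2 Q.1.2 ≤ b := by
      have := hcon2 P.1 P.2 Q.1 Q.2 hPQ1
      omega
    have hne : {d | ∃ u ∈ P.1.2, ∃ v ∈ Q.1.2, d = cdist u v}.Nonempty := by
      refine ⟨cdist (fj P + ((0:ℕ) : ZMod n₂)) (fj Q + ((0:ℕ) : ZMod n₂)),
        fj P + ((0:ℕ) : ZMod n₂), ?_, fj Q + ((0:ℕ) : ZMod n₂), ?_, rfl⟩
      · rw [hfj_spec P]; exact Finset.mem_image.2 ⟨0, Finset.mem_range.2 hl, rfl⟩
      · rw [hfj_spec Q]; exact Finset.mem_image.2 ⟨0, Finset.mem_range.2 hl, rfl⟩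
    have hmem' := Nat.sInf_mem hne
    obtain ⟨u, hu, v, hv, huv⟩ := hmem'
    have : cdist u v ≤ b := by rw [← huv]; exact hd
    rw [hfj_spec P] at hu
    rw [hfj_spec Q] at hv
    exact endpoints_close (by omega) this hu hv
  have hmain := endpoint_main hk hl hkb hlb h1 h2 E ?_ ?_ ?_
  · omega
  · -- proj-intersecting
    intro p hp q hq
    obtain ⟨P, rfl⟩ := hmem p hp
    obtain ⟨Q, rfl⟩ := hmem q hq
    rcases hproj P.1 P.2 Q.1 Q.2 with ⟨x, hx⟩ | ⟨x, hx⟩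
    · rw [Finset.mem_inter, hfi_spec P, hfi_spec Q] at hx
      exact Or.inl (close_of_mem_inter (by omega) hx.1 hx.2)
    · rw [Finset.mem_inter, hfj_spec P, hfj_spec Q] at hx
      exact Or.inr (close_of_mem_inter (by omega) hx.1 hx.2)
  · intro p hp q hq hpq
    obtain ⟨P, rfl⟩ := hmem p hp
    obtain ⟨Q, rfl⟩ := hmem q hq
    exact hiDist1 P Q hpq
  · intro p hp q hq hpq
    obtain ⟨P, rfl⟩ := hmem p hp
    obtain ⟨Q, rfl⟩ := hmem q hq
    exact hiDist2 P Q hpq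
end

section
/- Let k₁, k₂, ℓ₁, ℓ₂, b, n₁, n₂ be positive integers with k₁,k₂,ℓ₁,ℓ₂ ≤ b, 4b < n₁, 4b < n₂. Let Rᵢ (i=1,2) be families of kᵢ×ℓᵢ rectangles in Z_{n₁} × Z_{n₂}, and suppose R = R₁ ∪ R₂ is proj-intersecting. Then R cannot simultaneously contain a b-blocking pair of the form I₁×J₀, I₂×J₀ with d(I₁,I₂) ≥ b+1 (base in Z_{n₂}) and a b-blocking pair of the form I₀×J₃, I₀×J₄ with d(J₃,J₄) ≥ b+1 (base in Z_{n₁}). -/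
lemma cdist_le_of_mem {n : ℕ} [NeZero n] {i : ZMod n} {k b : ℕ} (hk : k ≤ b)
    {u v : ZMod n} (hu : u ∈ cInt i k) (hv : v ∈ cInt i k) : cdist u v ≤ b := by
  simp only [cInt, Finset.mem_image, Finset.mem_range] at hu hv
  obtain ⟨a, ha, rfl⟩ := hu
  obtain ⟨c, hc, rfl⟩ := hv
  rcases le_total c a with h | h
  · calc cdist _ _ ≤ ((i + a) - (i + c)).val := min_le_left _ _
      _ = ((a - c : ℕ) : ZMod n).val := by rw [Nat.cast_sub h]; congr 1; ring
      _ ≤ a - c := by rw [ZMod.val_natCast]; exact Nat.mod_le _ _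
      _ ≤ b := by omega
  · calc cdist _ _ ≤ ((i + c) - (i + a)).val := min_le_right _ _
      _ = ((c - a : ℕ) : ZMod n).val := by rw [Nat.cast_sub h]; congr 1; ring
      _ ≤ c - a := by rw [ZMod.val_natCast]; exact Nat.mod_le _ _
      _ ≤ b := by omega

lemma iDist_le_cdist {n : ℕ} {A B : Finset (ZMod n)} {u v : ZMod n}
    (hu : u ∈ A) (hv : v ∈ B) : iDist A B ≤ cdist u v :=
  Nat.sInf_le ⟨u, hu, v, hv, rfl⟩

lemma block {n b k : ℕ} [NeZero n] {i : ZMod n} (hk : k ≤ b)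
    {A B : Finset (ZMod n)} (hd : b + 1 ≤ iDist A B)
    (hA : (A ∩ cInt i k).Nonempty) (hB : (B ∩ cInt i k).Nonempty) : False := by
  obtain ⟨u, hu⟩ := hA
  obtain ⟨v, hv⟩ := hB
  rw [Finset.mem_inter] at hu hv
  have h1 := iDist_le_cdist hu.1 hv.1
  have h2 := cdist_le_of_mem hk hu.2 hv.2
  omega

theorem stmt8 (k₁ k₂ ℓ₁ ℓ₂ b n₁ n₂ : ℕ)
    (hk₁ : 0 < k₁) (hk₂ : 0 < k₂) (hl₁ : 0 < ℓ₁) (hl₂ : 0 < ℓ₂)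
    (hk₁b : k₁ ≤ b) (hk₂b : k₂ ≤ b) (hl₁b : ℓ₁ ≤ b) (hl₂b : ℓ₂ ≤ b)
    (h1 : 4 * b < n₁) (h2 : 4 * b < n₂)
    (R₁ R₂ : Finset (Finset (ZMod n₁) × Finset (ZMod n₂)))
    (hr1 : ∀ P ∈ R₁, IsRect k₁ ℓ₁ P) (hr2 : ∀ P ∈ R₂, IsRect k₂ ℓ₂ P)
    (hproj : ProjIntersecting (R₁ ∪ R₂)) :
    ¬ ((∃ P ∈ R₁ ∪ R₂, ∃ Q ∈ R₁ ∪ R₂, P.2 = Q.2 ∧ b + 1 ≤ iDist P.1 Q.1) ∧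
       (∃ P ∈ R₁ ∪ R₂, ∃ Q ∈ R₁ ∪ R₂, P.1 = Q.1 ∧ b + 1 ≤ iDist P.2 Q.2)) := by
  haveI : NeZero n₁ := ⟨by omega⟩
  haveI : NeZero n₂ := ⟨by omega⟩
  rintro ⟨⟨P, hP, Q, hQ, hPQ2, hd1⟩, ⟨P', hP', Q', hQ', hPQ1, hd2⟩⟩
  have hrect : ∀ S ∈ R₁ ∪ R₂,
      (∃ i k, k ≤ b ∧ S.1 = cInt i k) ∧ (∃ j l, l ≤ b ∧ S.2 = cInt j l) := by
    intro S hS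
    rcases Finset.mem_union.1 hS with h | h
    · obtain ⟨⟨i, hi⟩, ⟨j, hj⟩⟩ := hr1 S h
      exact ⟨⟨i, k₁, hk₁b, hi⟩, ⟨j, ℓ₁, hl₁b, hj⟩⟩
    · obtain ⟨⟨i, hi⟩, ⟨j, hj⟩⟩ := hr2 S h
      exact ⟨⟨i, k₂, hk₂b, hi⟩, ⟨j, ℓ₂, hl₂b, hj⟩⟩
  have step : ∀ T ∈ R₁ ∪ R₂, (P'.1 ∩ T.1).Nonempty := by
    intro T hT
    obtain ⟨j, l, hl, hT2⟩ := (hrect T hT).2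
    rcases hproj P' hP' T hT with h | h
    · exact h
    rcases hproj Q' hQ' T hT with h' | h'
    · rw [hPQ1]; exact h'
    · exfalso
      rw [hT2] at h h'
      exact block hl hd2 h h'
  obtain ⟨i, kX, hkX, hX⟩ := (hrect P' hP').1
  have h1' := step P hP
  have h2' := step Q hQ
  rw [hX, Finset.inter_comm] at h1' h2'
  exact block hkX hd1 h1' h2'
end

section
/- Let kᵢ, ℓᵢ (1 ≤ i ≤ m), b, n₁, n₂ be positive integers with kᵢ, ℓᵢ ≤ b and 9b² < n₁, n₂, and let λᵢ > 0 be real numbers. If Rᵢ are families of kᵢ×ℓᵢ rectangles in Z_{n₁} × Z_{n₂} whose union is proj-intersecting, then Σᵢ λᵢ|Rᵢ| ≤ max( n₁·Σᵢ λᵢℓᵢ , n₂·Σᵢ λᵢkᵢ ). -/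
/-!
Call `T` star-bounded if every subfamily of `k × ℓ` rectangles has at most `k * n₂` members,
the size of the star of `k × ℓ` rectangles whose first side contains a given point; it suffices
that `T` or its transpose is star-bounded. Rectangles are counted through their left ends.

Arcs of length `≤ b` meeting a fixed one lift to integer intervals, as `n ≥ 4b`. So pairwise
meeting first sides share a point (Helly), and `T` lies in a star. Otherwise take `P₁, P₂` with
disjoint first sides: a rectangle whose first side meets both contains a point `q` of the gap
between them, and any other has second side meeting `P₁.2 ∪ P₂.2`, inside an arc of length `< 2b`.
Likewise, unless the transpose lies in a star, there is such a point `p` in the other coordinate.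

If every first side comes within `b` of `q`, the rectangles not through `q` have left ends in a
window of size `< 9b² < n₂`. This is paid for by a left end through `q` whose first side misses
some rectangle `h` not through `q`: the rectangles there meet `h.2`, so fewer than `2b` of them
are left instead of `n₂`. The same applies to `p` and the transpose. Otherwise some first side is
far from `q`, so rectangles through `q` meet its second side, and similarly for `p`; every
rectangle then has its left ends in windows of total size at most `k * n₂`.
-/

open Finset

section Arcs

variable {n : ℕ}

theorem mem_cInt_s10 {x u : ZMod n} {k : ℕ} : u ∈ cInt x k ↔ ∃ j < k, x + j = u := by
  simp [cInt]

theorem mem_cInt_of_eq_add_intCast {x u : ZMod n} {k : ℕ} {j : ℤ} (hu : u = x + j)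
    (hj₀ : 0 ≤ j) (hjk : j < k) : u ∈ cInt x k := by
  lift j to ℕ using hj₀
  exact mem_cInt_s10.2 ⟨j, by omega, by simp [hu]⟩

theorem cInt_mono {x : ZMod n} {k k' : ℕ} (h : k ≤ k') : cInt x k ⊆ cInt x k' :=
  image_subset_image (range_subset_range.2 h)

theorem card_cInt_le (x : ZMod n) (k : ℕ) : (cInt x k).card ≤ k :=
  card_image_le.trans (card_range k).le

theorem cInt_one (x : ZMod n) : cInt x 1 = {x} := by
  simp [cInt]

theorem cInt_inter_cInt_nonempty_iff {x a : ZMod n} {k m : ℕ} (hk : 0 < k) (hm : 0 < m) :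
    (cInt x k ∩ cInt a m).Nonempty ↔ x ∈ cInt (a - ((k - 1 : ℕ) : ZMod n)) (k + m - 1) := by
  simp only [Finset.Nonempty, mem_inter, mem_cInt_s10]
  constructor
  · rintro ⟨u, ⟨j, hj, rfl⟩, j', hj', hu⟩
    have h : ((k - 1 - j + j' : ℕ) : ZMod n) + j = ((k - 1 : ℕ) : ZMod n) + j' := by
      rw [← Nat.cast_add, ← Nat.cast_add]; congr 1; omega
    refine ⟨k - 1 - j + j', by omega, ?_⟩
    linear_combination h + hu
  · rintro ⟨t, ht, rfl⟩
    rcases le_or_gt t (k - 1) with htk | htk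
    · have h : (t : ZMod n) + ((k - 1 - t : ℕ) : ZMod n) = ((k - 1 : ℕ) : ZMod n) := by
        rw [← Nat.cast_add]; congr 1; omega
      refine ⟨a, ⟨k - 1 - t, by omega, ?_⟩, 0, hm, by simp⟩
      linear_combination h
    · have h : ((k - 1 : ℕ) : ZMod n) + ((t - (k - 1) : ℕ) : ZMod n) = t := by
        rw [← Nat.cast_add]; congr 1; omega
      refine ⟨_, ⟨0, hk, rfl⟩, t - (k - 1), by omega, ?_⟩
      linear_combination h

theorem exists_eq_add_intCast_of_inter_nonempty {x a : ZMod n} {k m : ℕ}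
    (h : (cInt x k ∩ cInt a m).Nonempty) : ∃ t : ℤ, x = a + t ∧ -k < t ∧ t < m := by
  obtain ⟨u, hu⟩ := h
  obtain ⟨⟨j, hj, hxu⟩, j', hj', hau⟩ := And.imp mem_cInt_s10.1 mem_cInt_s10.1 (mem_inter.1 hu)
  refine ⟨j' - j, ?_, by omega, by omega⟩
  push_cast
  linear_combination hxu - hau

theorem cInt_add_intCast_inter_nonempty_iff {a : ZMod n} {s t : ℤ} {k m : ℕ}
    (hk : 0 < k) (hm : 0 < m) (hst : s - t + k ≤ n) (hts : t - s + m ≤ n) :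
    (cInt (a + (s : ZMod n)) k ∩ cInt (a + (t : ZMod n)) m).Nonempty ↔ s < t + m ∧ t < s + k := by
  constructor
  · rintro ⟨u, hu⟩
    obtain ⟨⟨j, hj, hsu⟩, j', hj', htu⟩ := And.imp mem_cInt_s10.1 mem_cInt_s10.1 (mem_inter.1 hu)
    have hdvd : (n : ℤ) ∣ s + j - t - j' := by
      rw [← ZMod.intCast_zmod_eq_zero_iff_dvd]
      push_cast
      linear_combination hsu - htu
    have := Int.eq_zero_of_abs_lt_dvd hdvd (abs_lt.2 ⟨by omega, by omega⟩)
    omega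
  · rintro ⟨h₁, h₂⟩
    refine ⟨a + ((max s t : ℤ) : ZMod n), mem_inter.2 ⟨?_, ?_⟩⟩
    · exact mem_cInt_of_eq_add_intCast (j := max s t - s) (by push_cast; ring) (by omega)
        (by omega)
    · exact mem_cInt_of_eq_add_intCast (j := max s t - t) (by push_cast; ring) (by omega)
        (by omega)

theorem cInt_subset_cInt_of_add_eq {x y : ZMod n} {i j k m : ℕ} (h : x + i = y + j)
    (hji : j ≤ i) (hik : i < k) : cInt y m ⊆ cInt x (k + m - 1) := by
  intro u hu
  obtain ⟨t, ht, rfl⟩ := mem_cInt_s10.1 hu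
  have hc : ((i - j + t : ℕ) : ZMod n) + j = i + t := by
    rw [← Nat.cast_add, ← Nat.cast_add]; congr 1; omega
  exact mem_cInt_s10.2 ⟨i - j + t, by omega, by linear_combination hc + h⟩

theorem exists_union_subset_cInt_of_inter_nonempty {x y : ZMod n} {k m : ℕ}
    (h : (cInt x k ∩ cInt y m).Nonempty) : ∃ z, cInt x k ∪ cInt y m ⊆ cInt z (k + m - 1) := by
  obtain ⟨u, hu⟩ := h
  obtain ⟨⟨i, hi, hxu⟩, j, hj, hyu⟩ := And.imp mem_cInt_s10.1 mem_cInt_s10.1 (mem_inter.1 hu)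
  rcases le_total j i with hji | hij
  · exact ⟨x, union_subset (cInt_mono (by omega))
      (cInt_subset_cInt_of_add_eq (hxu.trans hyu.symm) hji hi)⟩
  · refine ⟨y, union_subset ?_ (cInt_mono (by omega))⟩
    rw [add_comm k]
    exact cInt_subset_cInt_of_add_eq (hyu.trans hxu.symm) hij hj

def cBall (q : ZMod n) (r : ℕ) : Finset (ZMod n) := cInt (q - r) (2 * r + 1)

theorem cInt_subset_cBall {x q : ZMod n} {k r : ℕ} (hq : q ∈ cInt x k) (hk : k ≤ r + 1) :
    cInt x k ⊆ cBall q r := by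
  obtain ⟨i, hi, rfl⟩ := mem_cInt_s10.1 hq
  exact cInt_subset_cInt_of_add_eq (i := r) (j := i) (k := r + 1) (by ring) (by omega) (by omega)
    |>.trans (cInt_mono (by omega))

def IsShortArc (b : ℕ) (I : Finset (ZMod n)) : Prop :=
  ∃ x k, 0 < k ∧ k ≤ b ∧ I = cInt x k

theorem exists_mem_of_pairwise_inter_nonempty {b : ℕ} (hn : 3 * b ≤ n)
    {F : Finset (Finset (ZMod n))} (hF : ∀ I ∈ F, IsShortArc b I)
    (hmeet : ∀ I ∈ F, ∀ J ∈ F, (I ∩ J).Nonempty) : ∃ z, ∀ I ∈ F, z ∈ I := by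
  obtain rfl | ⟨I₀, hI₀⟩ := F.eq_empty_or_nonempty
  · simp
  obtain ⟨a, k₀, -, hk₀b, rfl⟩ := hF I₀ hI₀
  have hoff : ∀ I ∈ F, ∃ s : ℤ, ∃ k, 0 < k ∧ k ≤ b ∧ I = cInt (a + (s : ZMod n)) k ∧
      -(b : ℤ) < s ∧ s < b := by
    intro I hI
    obtain ⟨x, k, hk, hkb, rfl⟩ := hF I hI
    obtain ⟨s, rfl, hs⟩ := exists_eq_add_intCast_of_inter_nonempty (hmeet _ hI _ hI₀)
    exact ⟨s, k, hk, hkb, rfl, by omega, by omega⟩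
  -- The common point is the rightmost left end, in coordinates centred at `a`.
  obtain ⟨M, ⟨J, hJ, m, hm, hmb, rfl, hM⟩, hMmax⟩ := Int.exists_greatest_of_bdd
    (P := fun t : ℤ => ∃ J ∈ F, ∃ m, 0 < m ∧ m ≤ b ∧ J = cInt (a + (t : ZMod n)) m ∧
      -(b : ℤ) < t ∧ t < b)
    ⟨b, fun _ ⟨_, _, _, _, _, _, _, ht⟩ => ht.le⟩
    (let ⟨s, hs⟩ := hoff _ hI₀; ⟨s, _, hI₀, hs⟩)
  refine ⟨a + (M : ZMod n), fun I hI => ?_⟩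
  obtain ⟨s, k, hk, hkb, rfl, hs⟩ := hoff I hI
  have hsM : s ≤ M := hMmax s ⟨_, hI, k, hk, hkb, rfl, hs⟩
  have hMs := (cInt_add_intCast_inter_nonempty_iff hk hm (by omega) (by omega)).1
    (hmeet _ hI _ hJ)
  exact mem_cInt_of_eq_add_intCast (j := M - s) (by push_cast; ring) (by omega) (by omega)

theorem mem_of_inter_nonempty_of_inter_nonempty_add {b k₁ k₂ : ℕ} (hn : 4 * b ≤ n)
    {x₁ : ZMod n} {t : ℤ} (hk₂ : 0 < k₂) (hk₂b : k₂ ≤ b) (ht : k₁ ≤ t) (htb : t < 2 * b)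
    {I : Finset (ZMod n)} (hI : IsShortArc b I) (h₁ : (I ∩ cInt x₁ k₁).Nonempty)
    (h₂ : (I ∩ cInt (x₁ + (t : ZMod n)) k₂).Nonempty) :
    x₁ + ((k₁ - 1 : ℤ) : ZMod n) ∈ I := by
  obtain ⟨x, k, hk, hkb, rfl⟩ := hI
  obtain ⟨s, rfl, hs⟩ := exists_eq_add_intCast_of_inter_nonempty h₁
  have := (cInt_add_intCast_inter_nonempty_iff hk hk₂ (by omega) (by omega)).1 h₂
  exact mem_cInt_of_eq_add_intCast (j := k₁ - 1 - s) (by push_cast; ring) (by omega) (by omega)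

theorem exists_mem_of_inter_nonempty_of_inter_nonempty {b k₁ k₂ : ℕ}
    (hn : 4 * b ≤ n) {x₁ x₂ : ZMod n} (hk₁ : 0 < k₁) (hk₁b : k₁ ≤ b) (hk₂ : 0 < k₂)
    (hk₂b : k₂ ≤ b) (hdisj : Disjoint (cInt x₁ k₁) (cInt x₂ k₂)) :
    ∃ q, ∀ I, IsShortArc b I → (I ∩ cInt x₁ k₁).Nonempty → (I ∩ cInt x₂ k₂).Nonempty →
      q ∈ I := by
  by_cases hI₀ : ∃ I, IsShortArc b I ∧ (I ∩ cInt x₁ k₁).Nonempty ∧ (I ∩ cInt x₂ k₂).Nonempty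
  swap
  · exact ⟨0, fun I hI h₁ h₂ => (hI₀ ⟨I, hI, h₁, h₂⟩).elim⟩
  obtain ⟨_, ⟨x, k, hk, hkb, rfl⟩, h₁, h₂⟩ := hI₀
  obtain ⟨s, rfl, hs⟩ := exists_eq_add_intCast_of_inter_nonempty h₁
  obtain ⟨r, hr, hr'⟩ := exists_eq_add_intCast_of_inter_nonempty h₂
  have hx₂ : x₂ = x₁ + ((s - r : ℤ) : ZMod n) := by push_cast; linear_combination -hr
  have hx₁ : x₁ = x₂ + ((r - s : ℤ) : ZMod n) := by push_cast; linear_combination hr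
  have hsep := cInt_add_intCast_inter_nonempty_iff (a := x₁) (s := 0) (t := s - r) hk₁ hk₂
    (by omega) (by omega)
  rw [Int.cast_zero, add_zero, ← hx₂, ← not_disjoint_iff_nonempty_inter] at hsep
  rcases not_and_or.1 (hsep.not.1 (not_not.2 hdisj)) with h | h
  · exact ⟨x₂ + ((k₂ - 1 : ℤ) : ZMod n), fun I hI h₁ h₂ =>
      mem_of_inter_nonempty_of_inter_nonempty_add hn hk₁ hk₁b (by omega) (by omega) hI h₂
        (hx₁ ▸ h₁)⟩
  · exact ⟨x₁ + ((k₁ - 1 : ℤ) : ZMod n), fun I hI h₁ h₂ =>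
      mem_of_inter_nonempty_of_inter_nonempty_add hn hk₂ hk₂b (by omega) (by omega) hI h₁
        (hx₂ ▸ h₂)⟩

theorem exists_mem_cInt_disjoint [NeZero n] {q x : ZMod n} {k m : ℕ} (hq : q ∉ cInt x m)
    (hk : 0 < k) (hm : 0 < m) (hn : m + k ≤ n) :
    ∃ y, q ∈ cInt y k ∧ Disjoint (cInt y k) (cInt x m) := by
  set d := (q - x).val
  have hd : d < n := ZMod.val_lt _
  have hqd : q = x + d := by simp [d]
  have hmd : m ≤ d := by
    by_contra h
    exact hq (mem_cInt_s10.2 ⟨d, by omega, hqd.symm⟩)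
  -- Slide the left end back from `q` just far enough to avoid wrapping onto `cInt x m`.
  set s := min d (n - k)
  have hsep := cInt_add_intCast_inter_nonempty_iff (a := x) (s := s) (t := 0) hk hm
    (by omega) (by omega)
  rw [Int.cast_zero, add_zero, ← not_disjoint_iff_nonempty_inter] at hsep
  refine ⟨x + ((s : ℤ) : ZMod n), ?_, not_not.1 (hsep.not.2 (by omega))⟩
  exact mem_cInt_of_eq_add_intCast (j := d - s) (by rw [hqd]; push_cast; ring) (by omega)
    (by omega)

def meetingStarts [NeZero n] (k : ℕ) (A : Finset (ZMod n)) : Finset (ZMod n) :=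
  univ.filter fun x => (cInt x k ∩ A).Nonempty

theorem mem_meetingStarts [NeZero n] {k : ℕ} {A : Finset (ZMod n)} {x : ZMod n} :
    x ∈ meetingStarts k A ↔ (cInt x k ∩ A).Nonempty := by
  simp [meetingStarts]

theorem mem_meetingStarts_singleton [NeZero n] {k : ℕ} {q x : ZMod n} :
    x ∈ meetingStarts k {q} ↔ q ∈ cInt x k := by
  simp [meetingStarts, Finset.Nonempty]

theorem card_meetingStarts_cInt_le [NeZero n] (k : ℕ) (a : ZMod n) (m : ℕ) :
    (meetingStarts k (cInt a m)).card ≤ k + m - 1 := by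
  rcases Nat.eq_zero_or_pos k with rfl | hk
  · simp [meetingStarts, cInt]
  rcases Nat.eq_zero_or_pos m with rfl | hm
  · simp [meetingStarts, cInt]
  calc (meetingStarts k (cInt a m)).card
      ≤ (cInt (a - ((k - 1 : ℕ) : ZMod n)) (k + m - 1)).card :=
        card_le_card fun x hx => (cInt_inter_cInt_nonempty_iff hk hm).1 (mem_meetingStarts.1 hx)
    _ ≤ k + m - 1 := card_cInt_le _ _

theorem card_meetingStarts_singleton_le [NeZero n] (k : ℕ) (q : ZMod n) :
    (meetingStarts k {q}).card ≤ k := by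
  simpa [cInt_one] using card_meetingStarts_cInt_le k q 1

end Arcs

theorem card_union_union_le {α : Type*} [DecidableEq α] (s t u : Finset α) :
    (s ∪ t ∪ u).card ≤ s.card + t.card + u.card :=
  (card_union_le _ _).trans (Nat.add_le_add_right (card_union_le _ _) _)

section Counting

variable {n₁ n₂ : ℕ} {F : Finset (Finset (ZMod n₁) × Finset (ZMod n₂))} {k ℓ : ℕ}

theorem card_le_card_of_forall_mem {S : Finset (ZMod n₁ × ZMod n₂)}
    (hF : ∀ P ∈ F, IsRect k ℓ P) (hS : ∀ x y, (cInt x k, cInt y ℓ) ∈ F → (x, y) ∈ S) :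
    F.card ≤ S.card := by
  calc F.card ≤ (S.image fun c => (cInt c.1 k, cInt c.2 ℓ)).card := by
        refine card_le_card fun P hP => ?_
        obtain ⟨⟨x, hx⟩, ⟨y, hy⟩⟩ := hF P hP
        have hP' : (cInt x k, cInt y ℓ) = P := Prod.ext hx.symm hy.symm
        exact mem_image.2 ⟨(x, y), hS x y (hP' ▸ hP), hP'⟩
    _ ≤ S.card := card_image_le

variable [NeZero n₁] [NeZero n₂]

theorem card_le_of_forall_mem_fst {q : ZMod n₁} (hF : ∀ P ∈ F, IsRect k ℓ P)
    (hq : ∀ P ∈ F, q ∈ P.1) : F.card ≤ k * n₂ := by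
  calc F.card ≤ (meetingStarts k {q} ×ˢ (univ : Finset (ZMod n₂))).card :=
        card_le_card_of_forall_mem hF fun x y hP =>
          mem_product.2 ⟨mem_meetingStarts_singleton.2 (hq _ hP), mem_univ y⟩
    _ ≤ k * n₂ := by
        rw [card_product, card_univ, ZMod.card]
        exact Nat.mul_le_mul_right _ (card_meetingStarts_singleton_le k q)

theorem card_le_of_blocked {q x' : ZMod n₁} {A W : Finset (ZMod n₁)} {B Y : Finset (ZMod n₂)}
    (hF : ∀ P ∈ F, IsRect k ℓ P) (hx' : q ∈ cInt x' k) (hA : Disjoint (cInt x' k) A)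
    (hB : ∀ P ∈ F, Disjoint P.1 A → (P.2 ∩ B).Nonempty)
    (hD : ∀ P ∈ F, q ∈ P.1 ∨ (P.1 ∩ W).Nonempty ∧ (P.2 ∩ Y).Nonempty) :
    F.card ≤ (k - 1) * n₂ + (meetingStarts ℓ B).card +
      (meetingStarts k W).card * (meetingStarts ℓ Y).card := by
  calc F.card ≤ ((meetingStarts k {q}).erase x' ×ˢ (univ : Finset (ZMod n₂)) ∪
        {x'} ×ˢ meetingStarts ℓ B ∪ meetingStarts k W ×ˢ meetingStarts ℓ Y).card := by
        refine card_le_card_of_forall_mem hF fun x y hP => ?_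
        simp only [mem_union, mem_product, mem_erase, mem_singleton, mem_univ, and_true]
        rcases hD _ hP with hq | ⟨hW, hY⟩
        · by_cases hx : x = x'
          · subst hx
            exact Or.inl (Or.inr ⟨rfl, mem_meetingStarts.2 (hB _ hP hA)⟩)
          · exact Or.inl (Or.inl ⟨hx, mem_meetingStarts_singleton.2 hq⟩)
        · exact Or.inr ⟨mem_meetingStarts.2 hW, mem_meetingStarts.2 hY⟩
    _ ≤ ((meetingStarts k {q}).card - 1) * n₂ + (meetingStarts ℓ B).card +
          (meetingStarts k W).card * (meetingStarts ℓ Y).card := by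
        refine (card_union_union_le _ _ _).trans_eq ?_
        rw [card_product, card_product, card_product, card_erase_of_mem
          (mem_meetingStarts_singleton.2 hx'), card_univ, ZMod.card, card_singleton, one_mul]
    _ ≤ _ := by
        gcongr
        exact card_meetingStarts_singleton_le k q

theorem card_le_of_mixed {q : ZMod n₁} {p : ZMod n₂} {A X : Finset (ZMod n₁)}
    {B Y : Finset (ZMod n₂)} (hF : ∀ P ∈ F, IsRect k ℓ P)
    (hq : ∀ P ∈ F, q ∈ P.1 → (P.2 ∩ B).Nonempty) (hp : ∀ P ∈ F, p ∈ P.2 → (P.1 ∩ A).Nonempty)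
    (hD : ∀ P ∈ F, q ∈ P.1 ∨ p ∈ P.2 ∨ (P.1 ∩ X).Nonempty ∧ (P.2 ∩ Y).Nonempty) :
    F.card ≤ k * (meetingStarts ℓ B).card + (meetingStarts k A).card * ℓ +
      (meetingStarts k X).card * (meetingStarts ℓ Y).card := by
  calc F.card ≤ (meetingStarts k {q} ×ˢ meetingStarts ℓ B ∪
        meetingStarts k A ×ˢ meetingStarts ℓ {p} ∪
        meetingStarts k X ×ˢ meetingStarts ℓ Y).card := by
        refine card_le_card_of_forall_mem hF fun x y hP => ?_
        simp only [mem_union, mem_product]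
        rcases hD _ hP with hqP | hpP | ⟨hX, hY⟩
        · exact Or.inl (Or.inl ⟨mem_meetingStarts_singleton.2 hqP,
            mem_meetingStarts.2 (hq _ hP hqP)⟩)
        · exact Or.inl (Or.inr ⟨mem_meetingStarts.2 (hp _ hP hpP),
            mem_meetingStarts_singleton.2 hpP⟩)
        · exact Or.inr ⟨mem_meetingStarts.2 hX, mem_meetingStarts.2 hY⟩
    _ ≤ _ := by
        refine (card_union_union_le _ _ _).trans ?_
        simp only [card_product]
        gcongr
        · exact card_meetingStarts_singleton_le k q
        · exact card_meetingStarts_singleton_le ℓ p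

end Counting

theorem blocked_count_le {k n b c₁ c₂ c₃ : ℕ} (hk : 0 < k) (h₁ : c₁ < 2 * b) (h₂ : c₂ ≤ 3 * b)
    (h₃ : c₃ + 2 ≤ 3 * b) (hn : 9 * b ^ 2 < n) : (k - 1) * n + c₁ + c₂ * c₃ ≤ k * n := by
  have hk' : (k - 1) * n + n = k * n := by
    rw [← Nat.succ_mul, Nat.succ_eq_add_one, Nat.sub_add_cancel hk]
  nlinarith [Nat.mul_le_mul_right c₃ h₂, Nat.mul_le_mul_left (3 * b) h₃]

theorem mixed_count_le {k ℓ b n cB cA cX cY : ℕ} (hk : 0 < k) (hlb : ℓ ≤ b)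
    (hB : cB + 1 ≤ ℓ + b) (hA : cA + 1 ≤ k + b) (hX : cX + 2 ≤ k + 2 * b) (hY : cY + 2 ≤ 3 * b)
    (hn : 9 * b ^ 2 < n) : k * cB + cA * ℓ + cX * cY ≤ k * n := by
  have e₁ : k * (cB + 1) ≤ k * (2 * b) := Nat.mul_le_mul_left k (by omega)
  have e₂ : (cA + 1) * ℓ ≤ (k + b) * b := Nat.mul_le_mul hA hlb
  have e₃ : (cX + 2) * (cY + 2) ≤ (k + 2 * b) * (3 * b) := Nat.mul_le_mul hX hY
  have e₄ : k * (9 * b ^ 2 + 1) ≤ k * n := Nat.mul_le_mul_left k hn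
  have e₅ : 1 * (9 * b ^ 2) ≤ k * (9 * b ^ 2) := Nat.mul_le_mul_right _ hk
  nlinarith

section Families

variable {n₁ n₂ b : ℕ} {T : Finset (Finset (ZMod n₁) × Finset (ZMod n₂))}

theorem ProjIntersecting.snd_nonempty (h : ProjIntersecting T) {P Q}
    (hP : P ∈ T) (hQ : Q ∈ T) (hd : Disjoint P.1 Q.1) : (P.2 ∩ Q.2).Nonempty :=
  (h P hP Q hQ).resolve_left fun hne => not_disjoint_iff_nonempty_inter.2 hne hd

theorem ProjIntersecting.fst_nonempty (h : ProjIntersecting T) {P Q}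
    (hP : P ∈ T) (hQ : Q ∈ T) (hd : Disjoint P.2 Q.2) : (P.1 ∩ Q.1).Nonempty :=
  (h P hP Q hQ).resolve_right fun hne => not_disjoint_iff_nonempty_inter.2 hne hd

theorem ProjIntersecting.image_swap (h : ProjIntersecting T) :
    ProjIntersecting (T.image Prod.swap) := by
  simp only [ProjIntersecting, forall_mem_image, Prod.fst_swap, Prod.snd_swap]
  exact fun P hP Q hQ => (h P hP Q hQ).symm

theorem forall_isShortArc_image_swap (hT : ∀ P ∈ T, IsShortArc b P.1 ∧ IsShortArc b P.2) :
    ∀ P ∈ T.image Prod.swap, IsShortArc b P.1 ∧ IsShortArc b P.2 := by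
  simpa only [forall_mem_image, Prod.fst_swap, Prod.snd_swap, and_comm] using hT

def StarBounded (b : ℕ) (T : Finset (Finset (ZMod n₁) × Finset (ZMod n₂))) : Prop :=
  ∀ k ℓ : ℕ, 0 < k → k ≤ b → 0 < ℓ → ℓ ≤ b →
    ∀ F ⊆ T, (∀ P ∈ F, IsRect k ℓ P) → F.card ≤ k * n₂

theorem exists_mem_fst_or_inter_snd_nonempty (hn : 4 * b ≤ n₁)
    (hT : ∀ P ∈ T, IsShortArc b P.1 ∧ IsShortArc b P.2)
    (hproj : ProjIntersecting T) {P₁ P₂} (hP₁ : P₁ ∈ T) (hP₂ : P₂ ∈ T)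
    (hd : Disjoint P₁.1 P₂.1) :
    ∃ q ys L, L < 2 * b ∧ ∀ P ∈ T, q ∈ P.1 ∨ (P.2 ∩ cInt ys L).Nonempty := by
  obtain ⟨⟨x₁, k₁, hk₁, hk₁b, hx₁⟩, ⟨y₁, l₁, -, hl₁b, hy₁⟩⟩ := hT P₁ hP₁
  obtain ⟨⟨x₂, k₂, hk₂, hk₂b, hx₂⟩, ⟨y₂, l₂, -, hl₂b, hy₂⟩⟩ := hT P₂ hP₂
  obtain ⟨q, hq⟩ := exists_mem_of_inter_nonempty_of_inter_nonempty hn hk₁ hk₁b hk₂ hk₂b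
    (hx₁ ▸ hx₂ ▸ hd)
  obtain ⟨ys, hys⟩ := exists_union_subset_cInt_of_inter_nonempty
    (hy₁ ▸ hy₂ ▸ hproj.snd_nonempty hP₁ hP₂ hd)
  refine ⟨q, ys, l₁ + l₂ - 1, by omega, fun P hP => ?_⟩
  rcases hproj P hP P₁ hP₁ with h₁ | h₁
  · rcases hproj P hP P₂ hP₂ with h₂ | h₂
    · exact Or.inl (hq _ (hT P hP).1 (hx₁ ▸ h₁) (hx₂ ▸ h₂))
    · exact Or.inr (h₂.mono (inter_subset_inter_left (hy₂ ▸ subset_union_right.trans hys)))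
  · exact Or.inr (h₁.mono (inter_subset_inter_left (hy₁ ▸ subset_union_left.trans hys)))

variable [NeZero n₁] [NeZero n₂]

theorem starBounded_of_forall_mem {q : ZMod n₁} (hq : ∀ P ∈ T, q ∈ P.1) : StarBounded b T :=
  fun _ _ _ _ _ _ _ hFT hF => card_le_of_forall_mem_fst hF fun P hP => hq P (hFT hP)

theorem starBounded_of_pairwise_inter_nonempty (hn : 3 * b ≤ n₁)
    (hT : ∀ P ∈ T, IsShortArc b P.1 ∧ IsShortArc b P.2)
    (hx : ∀ P ∈ T, ∀ Q ∈ T, (P.1 ∩ Q.1).Nonempty) : StarBounded b T := by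
  obtain ⟨z, hz⟩ := exists_mem_of_pairwise_inter_nonempty hn (F := T.image Prod.fst)
    (by simpa only [forall_mem_image] using fun P hP => (hT P hP).1)
    (by simpa only [forall_mem_image] using hx)
  exact starBounded_of_forall_mem fun P hP => hz _ (mem_image_of_mem _ hP)

theorem starBounded_of_near (hn₁ : 2 * b ≤ n₁) (hn₂ : 9 * b ^ 2 < n₂)
    (hT : ∀ P ∈ T, IsShortArc b P.1 ∧ IsShortArc b P.2) (hproj : ProjIntersecting T)
    {q : ZMod n₁} {ys : ZMod n₂} {L : ℕ} (hL : L < 2 * b)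
    (hD : ∀ P ∈ T, q ∈ P.1 ∨ (P.1 ∩ cBall q b).Nonempty ∧ (P.2 ∩ cInt ys L).Nonempty) :
    StarBounded b T := by
  intro k ℓ hk hkb hl hlb F hFT hF
  by_cases hall : ∀ P ∈ T, q ∈ P.1
  · exact starBounded_of_forall_mem hall k ℓ hk hkb hl hlb F hFT hF
  obtain ⟨h, hh, hqh⟩ : ∃ h ∈ T, q ∉ h.1 := by simpa only [not_forall, exists_prop] using hall
  obtain ⟨⟨xh, kh, hkh, hkhb, hxh⟩, ⟨yh, lh, -, hlhb, hyh⟩⟩ := hT h hh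
  obtain ⟨x', hqx', hx'⟩ := exists_mem_cInt_disjoint (hxh ▸ hqh) hk hkh (by omega)
  have hcount := card_le_of_blocked hF hqx' (hxh ▸ hx')
    (fun P hP hPh => hproj.snd_nonempty (hFT hP) hh hPh) (fun P hP => hD P (hFT hP))
  have h₁ := card_meetingStarts_cInt_le ℓ yh lh
  have h₂ : (meetingStarts k (cBall q b)).card ≤ k + (2 * b + 1) - 1 :=
    card_meetingStarts_cInt_le _ _ _
  have h₃ := card_meetingStarts_cInt_le ℓ ys L
  rw [hyh] at hcount
  exact hcount.trans (blocked_count_le hk (by omega) (by omega) (by omega) hn₂)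

theorem starBounded_of_far (hn₂ : 9 * b ^ 2 < n₂)
    (hT : ∀ P ∈ T, IsShortArc b P.1 ∧ IsShortArc b P.2) (hproj : ProjIntersecting T)
    {q : ZMod n₁} {p : ZMod n₂} {xs : ZMod n₁} {ys : ZMod n₂} {L L' : ℕ} (hL : L < 2 * b)
    (hL' : L' < 2 * b) (hD : ∀ P ∈ T, q ∈ P.1 ∨ (P.2 ∩ cInt ys L).Nonempty)
    (hD' : ∀ P ∈ T, p ∈ P.2 ∨ (P.1 ∩ cInt xs L').Nonempty) {h₀ h₁} (hh₀ : h₀ ∈ T)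
    (hq₀ : Disjoint h₀.1 (cBall q b)) (hh₁ : h₁ ∈ T) (hp₁ : Disjoint h₁.2 (cBall p b)) :
    StarBounded b T := by
  intro k ℓ hk hkb hl hlb F hFT hF
  obtain ⟨-, ⟨y₀, l₀, -, hl₀b, hy₀⟩⟩ := hT h₀ hh₀
  obtain ⟨⟨x₁, k₁, -, hk₁b, hx₁⟩, -⟩ := hT h₁ hh₁
  -- A rectangle whose first side contains `q` lies inside `cBall q b`, so it misses `h₀.1`.
  have hq : ∀ P ∈ F, q ∈ P.1 → (P.2 ∩ h₀.2).Nonempty := by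
    intro P hP hqP
    obtain ⟨⟨x, hx⟩, -⟩ := hF P hP
    rw [hx] at hqP
    exact hproj.snd_nonempty (hFT hP) hh₀
      (hx ▸ (hq₀.mono_right (cInt_subset_cBall hqP (by omega))).symm)
  have hp : ∀ P ∈ F, p ∈ P.2 → (P.1 ∩ h₁.1).Nonempty := by
    intro P hP hpP
    obtain ⟨-, ⟨y, hy⟩⟩ := hF P hP
    rw [hy] at hpP
    exact hproj.fst_nonempty (hFT hP) hh₁
      (hy ▸ (hp₁.mono_right (cInt_subset_cBall hpP (by omega))).symm)
  have hcount := card_le_of_mixed hF hq hp fun P hP =>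
    (hD P (hFT hP)).elim Or.inl fun hY =>
      (hD' P (hFT hP)).elim (Or.inr ∘ Or.inl) fun hX => Or.inr (Or.inr ⟨hX, hY⟩)
  rw [hy₀, hx₁] at hcount
  have hB := card_meetingStarts_cInt_le ℓ y₀ l₀
  have hA := card_meetingStarts_cInt_le k x₁ k₁
  have hX := card_meetingStarts_cInt_le k xs L'
  have hY := card_meetingStarts_cInt_le ℓ ys L
  exact hcount.trans (mixed_count_le hk hlb (by omega) (by omega) (by omega) (by omega) hn₂)

theorem starBounded_or_of_mem_or_inter_nonempty (hn₁ : 9 * b ^ 2 < n₁) (hn₂ : 9 * b ^ 2 < n₂)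
    (hT : ∀ P ∈ T, IsShortArc b P.1 ∧ IsShortArc b P.2) (hproj : ProjIntersecting T)
    {q : ZMod n₁} {p : ZMod n₂} {xs : ZMod n₁} {ys : ZMod n₂} {L L' : ℕ} (hL : L < 2 * b)
    (hL' : L' < 2 * b) (hD : ∀ P ∈ T, q ∈ P.1 ∨ (P.2 ∩ cInt ys L).Nonempty)
    (hD' : ∀ P ∈ T, p ∈ P.2 ∨ (P.1 ∩ cInt xs L').Nonempty) :
    StarBounded b T ∨ StarBounded b (T.image Prod.swap) := by
  have h2b₁ : 2 * b ≤ n₁ := by nlinarith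
  have h2b₂ : 2 * b ≤ n₂ := by nlinarith
  by_cases hfar : ∃ h₀ ∈ T, Disjoint h₀.1 (cBall q b)
  swap
  · refine Or.inl (starBounded_of_near (q := q) (ys := ys) h2b₁ hn₂ hT hproj hL fun P hP => ?_)
    exact (hD P hP).imp_right fun hY =>
      ⟨not_disjoint_iff_nonempty_inter.1 fun hd => hfar ⟨P, hP, hd⟩, hY⟩
  by_cases hfar' : ∃ h₁ ∈ T, Disjoint h₁.2 (cBall p b)
  swap
  · refine Or.inr (starBounded_of_near (q := p) (ys := xs) h2b₂ hn₁
      (forall_isShortArc_image_swap hT) hproj.image_swap hL' ?_)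
    simp only [forall_mem_image, Prod.fst_swap, Prod.snd_swap]
    exact fun P hP => (hD' P hP).imp_right fun hX =>
      ⟨not_disjoint_iff_nonempty_inter.1 fun hd => hfar' ⟨P, hP, hd⟩, hX⟩
  obtain ⟨h₀, hh₀, hq₀⟩ := hfar
  obtain ⟨h₁, hh₁, hp₁⟩ := hfar'
  exact Or.inl (starBounded_of_far hn₂ hT hproj hL hL' hD hD' hh₀ hq₀ hh₁ hp₁)

theorem starBounded_or_starBounded_image_swap (hn₁ : 9 * b ^ 2 < n₁) (hn₂ : 9 * b ^ 2 < n₂)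
    (hT : ∀ P ∈ T, IsShortArc b P.1 ∧ IsShortArc b P.2) (hproj : ProjIntersecting T) :
    StarBounded b T ∨ StarBounded b (T.image Prod.swap) := by
  have h4b₁ : 4 * b ≤ n₁ := by nlinarith
  have h4b₂ : 4 * b ≤ n₂ := by nlinarith
  have hT' := forall_isShortArc_image_swap hT
  by_cases hx : ∃ P₁ ∈ T, ∃ P₂ ∈ T, Disjoint P₁.1 P₂.1
  swap
  · exact Or.inl (starBounded_of_pairwise_inter_nonempty (by omega) hT fun P hP Q hQ =>
      not_disjoint_iff_nonempty_inter.1 fun hd => hx ⟨P, hP, Q, hQ, hd⟩)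
  by_cases hy : ∃ Q₁ ∈ T, ∃ Q₂ ∈ T, Disjoint Q₁.2 Q₂.2
  swap
  · refine Or.inr (starBounded_of_pairwise_inter_nonempty (by omega) hT' ?_)
    simp only [forall_mem_image, Prod.fst_swap]
    exact fun P hP Q hQ => not_disjoint_iff_nonempty_inter.1 fun hd => hy ⟨P, hP, Q, hQ, hd⟩
  obtain ⟨P₁, hP₁, P₂, hP₂, hd⟩ := hx
  obtain ⟨Q₁, hQ₁, Q₂, hQ₂, hd'⟩ := hy
  obtain ⟨q, ys, L, hL, hD⟩ := exists_mem_fst_or_inter_snd_nonempty h4b₁ hT hproj hP₁ hP₂ hd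
  obtain ⟨p, xs, L', hL', hD'⟩ := exists_mem_fst_or_inter_snd_nonempty h4b₂ hT' hproj.image_swap
    (mem_image_of_mem Prod.swap hQ₁) (mem_image_of_mem Prod.swap hQ₂) hd'
  exact starBounded_or_of_mem_or_inter_nonempty hn₁ hn₂ hT hproj hL hL' hD
    (by simpa only [forall_mem_image, Prod.fst_swap, Prod.snd_swap] using hD')

end Families

theorem sum_mul_le_mul_sum_mul {ι : Type*} (s : Finset ι) {w : ι → ℝ} (hw : ∀ i, 0 ≤ w i)
    {a c : ι → ℕ} {N : ℕ} (h : ∀ i, a i ≤ c i * N) :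
    ∑ i ∈ s, w i * a i ≤ N * ∑ i ∈ s, w i * c i := by
  rw [mul_sum]
  refine sum_le_sum fun i _ => ?_
  calc w i * a i ≤ w i * (c i * N) := mul_le_mul_of_nonneg_left (by exact_mod_cast h i) (hw i)
    _ = N * (w i * c i) := by ring

theorem stmt10 (m b n₁ n₂ : ℕ) (k ℓ : Fin m → ℕ) (lam : Fin m → ℝ)
    (hk : ∀ i, 0 < k i ∧ k i ≤ b) (hl : ∀ i, 0 < ℓ i ∧ ℓ i ≤ b)
    (hlam : ∀ i, 0 < lam i)
    (h1 : 9 * b ^ 2 < n₁) (h2 : 9 * b ^ 2 < n₂)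
    (R : Fin m → Finset (Finset (ZMod n₁) × Finset (ZMod n₂)))
    (hrect : ∀ i, ∀ P ∈ R i, IsRect (k i) (ℓ i) P)
    (hproj : ProjIntersecting (Finset.univ.biUnion R)) :
    ∑ i, lam i * ((R i).card : ℝ) ≤
      max ((n₁ : ℝ) * ∑ i, lam i * (ℓ i : ℝ)) ((n₂ : ℝ) * ∑ i, lam i * (k i : ℝ)) := by
  have : NeZero n₁ := ⟨by omega⟩
  have : NeZero n₂ := ⟨by omega⟩
  have hRT : ∀ i, R i ⊆ univ.biUnion R := fun i => subset_biUnion_of_mem R (mem_univ i)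
  have hT : ∀ P ∈ univ.biUnion R, IsShortArc b P.1 ∧ IsShortArc b P.2 := by
    intro P hP
    obtain ⟨i, -, hPi⟩ := mem_biUnion.1 hP
    obtain ⟨⟨x, hx⟩, ⟨y, hy⟩⟩ := hrect i P hPi
    exact ⟨⟨x, k i, (hk i).1, (hk i).2, hx⟩, ⟨y, ℓ i, (hl i).1, (hl i).2, hy⟩⟩
  have hw : ∀ i, 0 ≤ lam i := fun i => (hlam i).le
  rcases starBounded_or_starBounded_image_swap h1 h2 hT hproj with hs | hs
  · exact le_max_of_le_right <| sum_mul_le_mul_sum_mul _ hw fun i =>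
      hs _ _ (hk i).1 (hk i).2 (hl i).1 (hl i).2 _ (hRT i) (hrect i)
  · refine le_max_of_le_left <| sum_mul_le_mul_sum_mul _ hw fun i => ?_
    rw [← card_image_of_injective _ Prod.swap_injective]
    exact hs _ _ (hl i).1 (hl i).2 (hk i).1 (hk i).2 _ (image_subset_image (hRT i))
      (forall_mem_image.2 fun P hP => (hrect i P hP).symm)
end
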